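/- Let 𝔤 = 𝔥 ⊕ 𝔪 be a symmetric decomposition of a finite-dimensional real Lie algebra 𝔤 with Killing form κ, let θ̂ be a Cartan involution of 𝔤 with θ̂(𝔥) = 𝔥 and θ̂(𝔪) = 𝔪, let S ∈ 𝔪 be nonzero with κ(S,S) = 0, and set 𝔟 := {X ∈ 𝔥 : there exists c ∈ ℝ with [X,S] = c·S}. Assume θ̂(𝔟) = 𝔟. Then 𝔟 is a Lie subalgebra of 𝔥, the restriction of κ to 𝔟 × 𝔟 is nondegenerate, and, setting 𝔫 := {X ∈ 𝔥 : κ(X,B) = 0 for all B ∈ 𝔟}, one has 𝔥 = 𝔟 ⊕ 𝔫 as real vector spaces and [𝔟, 𝔫] ⊆ 𝔫. -/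

import Mathlib

/-!
The stabilizer of the line `ℝ S` is closed under brackets because the scalars by which two of its
elements act on `S` commute. If `X ∈ 𝔟` were `κ`-orthogonal to `𝔟`, then in particular
`κ(X, θ X) = 0` since `θ X ∈ 𝔟`, which the Cartan positivity forbids unless `X = 0`. So `κ` is
nondegenerate on `𝔟`, whence `𝔤 = 𝔟 ⊕ 𝔟^⊥` by a dimension count and, as `𝔟 ≤ 𝔥`, also
`𝔥 = 𝔟 ⊕ (𝔥 ∩ 𝔟^⊥)`. Finally `[𝔟, 𝔟^⊥] ⊆ 𝔟^⊥` by the ad-invariance of `κ`.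
-/

namespace LieSubalgebra

variable (R : Type*) {L : Type*} [CommRing R] [LieRing L] [LieAlgebra R L]

def lineStabilizer (S : L) : LieSubalgebra R L where
  carrier := {X | ∃ c : R, ⁅X, S⁆ = c • S}
  zero_mem' := ⟨0, by simp⟩
  add_mem' := by
    rintro X Y ⟨c, hc⟩ ⟨d, hd⟩
    exact ⟨c + d, by rw [add_lie, hc, hd, add_smul]⟩
  smul_mem' := by
    rintro r X ⟨c, hc⟩
    exact ⟨r * c, by rw [smul_lie, hc, mul_smul]⟩
  lie_mem' := by
    rintro X Y ⟨c, hc⟩ ⟨d, hd⟩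
    refine ⟨0, ?_⟩
    rw [lie_lie, hc, hd, lie_smul, lie_smul, hc, hd, smul_smul, smul_smul, mul_comm, sub_self,
      zero_smul]

end LieSubalgebra

namespace LinearMap.BilinForm

theorem eq_zero_of_forall_apply_eq_zero_of_mapsTo {R M : Type*} [CommRing R] [Preorder R]
    [AddCommGroup M] [Module R M] {B : LinearMap.BilinForm R M} {θ : M → M}
    (hpos : ∀ x, x ≠ 0 → 0 < -B x (θ x)) {W : Set M} (hθW : Set.MapsTo θ W W)
    {x : M} (hx : x ∈ W) (hxW : ∀ y ∈ W, B x y = 0) : x = 0 := by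
  by_contra hx0
  simpa [hxW (θ x) (hθW hx)] using hpos x hx0

theorem exists_add_mem_inf_orthogonal {K V : Type*} [Field K] [AddCommGroup V] [Module K V]
    [FiniteDimensional K V] {B : LinearMap.BilinForm K V} (hB : B.IsRefl) {W H : Submodule K V}
    (hWH : W ≤ H) (hW : ∀ x ∈ W, (∀ y ∈ W, B x y = 0) → x = 0) {x : V} (hx : x ∈ H) :
    ∃ y ∈ W, ∃ z ∈ H ⊓ B.orthogonal W, x = y + z := by
  have hnd : (B.restrict W).Nondegenerate :=
    ((hB.domRestrict W).nondegenerate_iff_separatingLeft).mpr fun y hy =>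
      Subtype.ext (hW y y.2 fun z hz => hy ⟨z, hz⟩)
  have hcompl := (restrict_nondegenerate_iff_isCompl_orthogonal hB).mp hnd
  have hH : H = W ⊔ H ⊓ B.orthogonal W := by
    rw [inf_comm, ← sup_inf_assoc_of_le _ hWH, hcompl.sup_eq_top, top_inf_eq]
  rw [hH] at hx
  obtain ⟨y, hy, z, hz, rfl⟩ := Submodule.mem_sup.mp hx
  exact ⟨y, hy, z, hz, rfl⟩

theorem lie_mem_orthogonal {R L : Type*} [CommRing R] [LieRing L] [LieAlgebra R L]
    {Φ : LinearMap.BilinForm R L} (hΦ : Φ.lieInvariant L) (K : LieSubalgebra R L) {x y : L}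
    (hx : x ∈ K) (hy : y ∈ Φ.orthogonal K.toSubmodule) :
    ⁅x, y⁆ ∈ Φ.orthogonal K.toSubmodule := by
  intro z hz
  rw [← neg_eq_zero, ← hΦ]
  exact hy _ (K.lie_mem hx hz)

end LinearMap.BilinForm

open LieSubalgebra LinearMap.BilinForm in
theorem stmt0
    (L : Type*) [LieRing L] [LieAlgebra ℝ L] [FiniteDimensional ℝ L]
    (H : Submodule ℝ L)
    -- `𝔥` is a Lie subalgebra
    (hHsub : ∀ X ∈ H, ∀ Y ∈ H, ⁅X, Y⁆ ∈ H)
    -- Cartan involution preserving `𝔥` and `𝔪`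
    (θ : L ≃ₗ⁅ℝ⁆ L)
    (hpos : ∀ X : L, X ≠ 0 → 0 < -(killingForm ℝ L X (θ X)))
    -- the nonzero null vector `S ∈ 𝔪`
    (S : L)
    -- `𝔟 := stab_𝔥(ℝ S)`, assumed `θ`-invariant
    (b : Set L)
    (hb : b = {X : L | X ∈ H ∧ ∃ c : ℝ, ⁅X, S⁆ = c • S})
    (hθb : θ '' b = b)
    -- `𝔫 := κ`-orthocomplement of `𝔟` in `𝔥`
    (n : Set L)
    (hn : n = {X : L | X ∈ H ∧ ∀ B ∈ b, killingForm ℝ L X B = 0}) :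
    -- `𝔟` is a Lie subalgebra of `𝔥`
    (∀ X ∈ b, ∀ Y ∈ b, ⁅X, Y⁆ ∈ b) ∧
    -- κ restricted to `𝔟 × 𝔟` is nondegenerate
    (∀ X ∈ b, (∀ B ∈ b, killingForm ℝ L X B = 0) → X = 0) ∧
    -- `𝔥 = 𝔟 ⊕ 𝔫` as real vector spaces
    (∀ X ∈ H, ∃ Xb ∈ b, ∃ Xn ∈ n, X = Xb + Xn) ∧
    (∀ X : L, X ∈ b → X ∈ n → X = 0) ∧
    -- `[𝔟, 𝔫] ⊆ 𝔫`
    (∀ A ∈ b, ∀ N ∈ n, ⁅A, N⁆ ∈ n) := by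
  set κ := killingForm ℝ L
  let 𝔥 : LieSubalgebra ℝ L := { H with lie_mem' := fun {X Y} hX hY => hHsub X hX Y hY }
  set 𝔟 := 𝔥 ⊓ lineStabilizer ℝ S
  have hb𝔟 : b = 𝔟 := hb
  have hn𝔟 : n = ↑(H ⊓ κ.orthogonal 𝔟.toSubmodule) := by
    ext X
    simp [hn, hb𝔟, mem_orthogonal_iff, κ, LieModule.traceForm_comm ℝ L L _ X]
  subst hb𝔟 hn𝔟
  have hθ𝔟 : Set.MapsTo θ 𝔟 𝔟 := (Set.mapsTo_image θ _).mono_right hθb.subset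
  have hnd : ∀ X ∈ 𝔟, (∀ B ∈ 𝔟, κ X B = 0) → X = 0 := fun X hX =>
    eq_zero_of_forall_apply_eq_zero_of_mapsTo hpos hθ𝔟 hX
  refine ⟨fun X hX Y hY => 𝔟.lie_mem hX hY, hnd, ?_, ?_, ?_⟩
  · exact fun X hX => exists_add_mem_inf_orthogonal (LieModule.traceForm_isSymm ℝ L L).isRefl
      inf_le_left hnd hX
  · exact fun X hXb hXn => hnd X hXb fun B hB => LieModule.traceForm_comm ℝ L L B X ▸ hXn.2 B hB
  · exact fun A hA N hN => ⟨𝔥.lie_mem hA.1 hN.1,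
      lie_mem_orthogonal (LieModule.traceForm_lieInvariant ℝ L L) 𝔟 hA hN.2⟩
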